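/- Let G be a countable discrete group, (X,d) a G-system with ρ := diam_d(X) < 1, and {F_n} a Følner sequence in G. Suppose overline{mdim}_M(X,G,d) < ∞. Then the maps A⁺[0,ρ] → ℝ given by ζ ↦ overline{mdim}_M(X,G,ζ∘d) and ζ ↦ underline{mdim}_M(X,G,ζ∘d) are continuous with respect to the topology T on A⁺[0,ρ] generated by the sets B̃(ζ,ε) = { ϑ ∈ A⁺[0,ρ] : ζ(x)(x^ε − 1) < ϑ(x) − ζ(x) < ζ(x)(1 − x^ε)/x^ε for all x ∈ (0,ρ] }, ζ ∈ A⁺[0,ρ], ε > 0. (Equivalently, if d : X×X → [0,ρ] is surjective and A⁺_d(X) = { ζ∘d : ζ ∈ A⁺[0,ρ] } carries the topology W making ζ ↦ ζ∘d a homeomorphism from (A⁺[0,ρ],T), then ζ_d ↦ overline{mdim}_M(X,G,ζ_d) and ζ_d ↦ underline{mdim}_M(X,G,ζ_d) are continuous on (A⁺_d(X),W).) -/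

import Mathlib

open Filter Set Topology
open scoped ENNReal

namespace MeanDim19

/-- `d` is a metric on `X`. -/
def IsMetricOn {X : Type*} (d : X → X → ℝ) : Prop :=
  (∀ x y, 0 ≤ d x y) ∧ (∀ x y, d x y = 0 ↔ x = y) ∧
    (∀ x y, d x y = d y x) ∧ ∀ x y z, d x z ≤ d x y + d y z

/-- `d` induces the given topology on `X`. -/
def InducesTopology {X : Type*} [TopologicalSpace X] (d : X → X → ℝ) : Prop :=
  ∀ (x : X) (s : Set X), s ∈ 𝓝 x ↔ ∃ ε > 0, {y : X | d x y < ε} ⊆ s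

/-- `T` is a continuous (left) action of `G` on `X`. -/
def IsContAction {G X : Type*} [Group G] [TopologicalSpace X] (T : G → X → X) : Prop :=
  (∀ x : X, T 1 x = x) ∧ (∀ g h : G, ∀ x : X, T (g * h) x = T g (T h x)) ∧
    ∀ g : G, Continuous (T g)

/-- The dynamical (Bowen) metric `d_F(x,y) = max_{g ∈ F} d(gx, gy)`. -/
noncomputable def dynDist {G X : Type*} (T : G → X → X) (d : X → X → ℝ)
    (F : Finset G) (x y : X) : ℝ :=
  if h : F.Nonempty then F.sup' h (fun g => d (T g x) (T g y)) else 0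

/-- `K` is an `(F,ε)`-spanning subset of `E`. -/
def IsSpanningSet {G X : Type*} (T : G → X → X) (d : X → X → ℝ)
    (F : Finset G) (ε : ℝ) (E : Set X) (K : Finset X) : Prop :=
  ↑K ⊆ E ∧ ∀ x ∈ E, ∃ y ∈ K, dynDist T d F x y ≤ ε

/-- `r_F(d,ε,E)`: minimal cardinality of an `(F,ε)`-spanning subset of `E`. -/
noncomputable def spanNum {G X : Type*} (T : G → X → X) (d : X → X → ℝ)
    (F : Finset G) (ε : ℝ) (E : Set X) : ℕ :=
  sInf {n : ℕ | ∃ K : Finset X, IsSpanningSet T d F ε E K ∧ K.card = n}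

/-- The max-metric on the product. -/
def prodDist {X Y : Type*} (dX : X → X → ℝ) (dY : Y → Y → ℝ) (p q : X × Y) : ℝ :=
  max (dX p.1 q.1) (dY p.2 q.2)

/-- The diagonal action on the product. -/
def prodAction {G X Y : Type*} (T : G → X → X) (S : G → Y → Y) (g : G) (p : X × Y) : X × Y :=
  (T g p.1, S g p.2)

/-- `{F n}` is a Følner sequence of nonempty finite subsets of `G`. -/
def IsFolner {G : Type*} [Group G] (Fs : ℕ → Finset G) : Prop :=
  letI := Classical.decEq G
  (∀ n, (Fs n).Nonempty) ∧
    ∀ g : G, Tendsto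
      (fun n => (((Fs n) \ (Fs n).image (fun h => g * h)).card : ℝ) / ((Fs n).card : ℝ))
      atTop (𝓝 0)

/-- Upper metric mean dimension (via spanning numbers), w.r.t. a Følner sequence. -/
noncomputable def mdimMUpper {G X : Type*} (T : G → X → X) (d : X → X → ℝ)
    (Fs : ℕ → Finset G) (E : Set X) : ℝ≥0∞ :=
  limsup (fun ε : ℝ =>
      (limsup (fun n =>
          ENNReal.ofReal (Real.log (spanNum T d (Fs n) ε E : ℝ) / ((Fs n).card : ℝ))) atTop)
        / ENNReal.ofReal |Real.log ε|) (𝓝[>] (0 : ℝ))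

/-- Lower metric mean dimension (via spanning numbers), w.r.t. a Følner sequence. -/
noncomputable def mdimMLower {G X : Type*} (T : G → X → X) (d : X → X → ℝ)
    (Fs : ℕ → Finset G) (E : Set X) : ℝ≥0∞ :=
  liminf (fun ε : ℝ =>
      (limsup (fun n =>
          ENNReal.ofReal (Real.log (spanNum T d (Fs n) ε E : ℝ) / ((Fs n).card : ℝ))) atTop)
        / ENNReal.ofReal |Real.log ε|) (𝓝[>] (0 : ℝ))


/-- Diameter of a set with respect to an abstract metric `d` (with `diam ∅ = 0`). -/
noncomputable def setDiam {X : Type*} (d : X → X → ℝ) (A : Set X) : ℝ :=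
  sSup {r : ℝ | ∃ x ∈ A, ∃ y ∈ A, r = d x y}

/-- `ζ ∈ A[0,ρ]`: continuous, increasing, subadditive on `[0,ρ]`, nonnegative,
and vanishing exactly at `0`. -/
def MemA (ρ : ℝ) (ζ : ℝ → ℝ) : Prop :=
  ContinuousOn ζ (Set.Icc 0 ρ) ∧ MonotoneOn ζ (Set.Icc 0 ρ) ∧
    (∀ x ∈ Set.Icc 0 ρ, 0 ≤ ζ x) ∧
    (∀ x ∈ Set.Icc 0 ρ, ∀ y ∈ Set.Icc 0 ρ, x + y ∈ Set.Icc 0 ρ → ζ (x + y) ≤ ζ x + ζ y) ∧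
    ∀ x ∈ Set.Icc 0 ρ, (ζ x = 0 ↔ x = 0)

/-- `k_m(ζ) = liminf_{ε→0⁺} log ζ(ε) / log ε`. -/
noncomputable def km (ζ : ℝ → ℝ) : ℝ :=
  liminf (fun ε : ℝ => Real.log (ζ ε) / Real.log ε) (𝓝[>] (0 : ℝ))

/-- `k_M(ζ) = limsup_{ε→0⁺} log ζ(ε) / log ε`. -/
noncomputable def kM (ζ : ℝ → ℝ) : ℝ :=
  limsup (fun ε : ℝ => Real.log (ζ ε) / Real.log ε) (𝓝[>] (0 : ℝ))

/-- `A⁺[0,ρ]`: members of `A[0,ρ]` with `k_m(ζ) = k_M(ζ) > 0`. -/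
def MemAplus (ρ : ℝ) (ζ : ℝ → ℝ) : Prop :=
  MemA ρ ζ ∧ km ζ = kM ζ ∧ 0 < km ζ

/-- The subbasic set `B̃(ζ,ε)` of the topology `T` on `A⁺[0,ρ]`. -/
def tildeB (ρ : ℝ) (ζ : ℝ → ℝ) (ε : ℝ) : Set {f : ℝ → ℝ // MemAplus ρ f} :=
  {ϑ | ∀ x ∈ Set.Ioc (0 : ℝ) ρ,
    ζ x * (x ^ ε - 1) < ϑ.1 x - ζ x ∧ ϑ.1 x - ζ x < ζ x * (1 - x ^ ε) / x ^ ε}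

/-- The topology `T` on `A⁺[0,ρ]` generated by the sets `B̃(ζ,ε)`. -/
def Ttop (ρ : ℝ) : TopologicalSpace {f : ℝ → ℝ // MemAplus ρ f} :=
  TopologicalSpace.generateFrom
    {S | ∃ ζ : ℝ → ℝ, MemAplus ρ ζ ∧ ∃ ε : ℝ, 0 < ε ∧ S = tildeB ρ ζ ε}

/-!
For `ζ ∈ A⁺[0,ρ]` with exponent `k = k_m(ζ)`, `ζ(t)` lies between `t ^ (k + η)` and
`t ^ (k - η)` for small `t`, and `ϑ ∈ B̃(ζ,δ)` means `ζ(t) t^δ < ϑ(t) < ζ(t) / t^δ`. So at small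
scales `ζ ∘ d ≤ ε` forces `ϑ ∘ d ≤ ε ^ θ` and vice versa, with `θ = (k - 2δ) / (k + 2δ)`.
Since then `r_F(ϑ ∘ d, ε ^ θ) ≤ r_F(ζ ∘ d, ε)` and `|log ε ^ θ| = θ |log ε|`, both metric mean
dimensions satisfy `θ · mdim(ζ ∘ d) ≤ mdim(ϑ ∘ d) ≤ mdim(ζ ∘ d) / θ`, and `θ → 1` as `δ → 0`.
The same comparison with `ζ(t) ≤ t ^ (k / 2)` shows that `mdim(ζ ∘ d)` is finite.
-/

theorem _root_.Real.map_rpow_nhdsGT_zero {θ : ℝ} (hθ : 0 < θ) :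
    map (fun x : ℝ => x ^ θ) (𝓝[>] 0) = 𝓝[>] 0 := by
  have h : (fun x : ℝ => x ^ θ) ∘ Real.exp = Real.exp ∘ OrderIso.mulRight₀ θ hθ := by
    funext y
    simp [← Real.exp_mul]
  rw [← Real.map_exp_atBot, Filter.map_map, h, ← Filter.map_map, OrderIso.map_atBot]

theorem _root_.ENNReal.limsup_div_const {α : Type*} {f : Filter α} (u : α → ℝ≥0∞) {c : ℝ≥0∞}
    (hc : c ≠ 0) : limsup (fun x => u x / c) f = limsup u f / c := by
  simp only [div_eq_mul_inv]
  exact (ENNReal.limsup_mul_const_of_ne_top (ENNReal.inv_ne_top.2 hc)).trans (mul_comm _ _)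

theorem _root_.ENNReal.liminf_div_const {α : Type*} {f : Filter α} [f.NeBot] (u : α → ℝ≥0∞)
    {c : ℝ≥0∞} (hc : c ≠ 0) : liminf (fun x => u x / c) f = liminf u f / c := by
  simp only [div_eq_mul_inv]
  exact (ENNReal.liminf_mul_const_of_ne_top (ENNReal.inv_ne_top.2 hc)).trans (mul_comm _ _)

theorem _root_.Real.log_natCast_le_log_natCast {m n : ℕ} (h : m ≤ n) :
    Real.log m ≤ Real.log n := by
  rcases m.eq_zero_or_pos with rfl | hm
  · simpa using Real.log_natCast_nonneg n
  · exact Real.log_le_log (by exact_mod_cast hm) (by exact_mod_cast h)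

theorem _root_.tendsto_of_forall_eventually_le_le {α ι β : Type*} [TopologicalSpace β] [LinearOrder β]
    [OrderTopology β] {l : Filter α} {p : Filter ι} [p.NeBot] {f : α → β} {lo hi : ι → β}
    {b : β} (hlo : Tendsto lo p (𝓝 b)) (hhi : Tendsto hi p (𝓝 b))
    (h : ∀ᶠ i in p, ∀ᶠ a in l, lo i ≤ f a ∧ f a ≤ hi i) : Tendsto f l (𝓝 b) := by
  refine tendsto_order.2 ⟨fun c hc => ?_, fun c hc => ?_⟩
  · obtain ⟨i, hil, hci⟩ := (h.and (hlo.eventually (lt_mem_nhds hc))).exists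
    exact hil.mono fun a ha => hci.trans_le ha.1
  · obtain ⟨i, hil, hci⟩ := (h.and (hhi.eventually (gt_mem_nhds hc))).exists
    exact hil.mono fun a ha => ha.2.trans_lt hci

section Spanning

variable {G X : Type*} {T : G → X → X}

theorem exists_isSpanningSet [TopologicalSpace X] [CompactSpace X] (hT : ∀ g, Continuous (T g))
    {d : X → X → ℝ} (hdc : ∀ y, Continuous (d · y)) (hd0 : ∀ x, d x x = 0)
    (F : Finset G) {ε : ℝ} (hε : 0 < ε) : ∃ K : Finset X, IsSpanningSet T d F ε univ K := by
  let U : X → Set X := fun y => ⋂ g ∈ F, {x | d (T g x) (T g y) < ε}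
  have hU : ∀ y, IsOpen (U y) := fun y =>
    isOpen_biInter_finset fun g _ => isOpen_lt ((hdc _).comp (hT g)) continuous_const
  have hcover : univ ⊆ ⋃ y, U y := fun y _ =>
    mem_iUnion.2 ⟨y, mem_iInter₂.2 fun g _ => by simp [hd0, hε]⟩
  obtain ⟨K, hK⟩ := isCompact_univ.elim_finite_subcover U hU hcover
  refine ⟨K, subset_univ _, fun x _ => ?_⟩
  obtain ⟨y, hyK, hxy⟩ := mem_iUnion₂.1 (hK (mem_univ x))
  refine ⟨y, hyK, ?_⟩
  unfold dynDist
  split_ifs with hF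
  · exact (Finset.sup'_le_iff hF _).2 fun g hg => le_of_lt (mem_iInter₂.1 hxy g hg)
  · exact hε.le

theorem IsSpanningSet.mono {d₁ d₂ : X → X → ℝ} {F : Finset G} (hF : F.Nonempty) {ε₁ ε₂ : ℝ}
    {E : Set X} {K : Finset X} (h : ∀ x y, d₂ x y ≤ ε₂ → d₁ x y ≤ ε₁)
    (hK : IsSpanningSet T d₂ F ε₂ E K) : IsSpanningSet T d₁ F ε₁ E K := by
  refine ⟨hK.1, fun x hx => ?_⟩
  obtain ⟨y, hy, hxy⟩ := hK.2 x hx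
  refine ⟨y, hy, ?_⟩
  rw [dynDist, dif_pos hF] at hxy ⊢
  exact (Finset.sup'_le_iff hF _).2 fun g hg =>
    h _ _ ((Finset.le_sup' (fun g => d₂ (T g x) (T g y)) hg).trans hxy)

theorem spanNum_le_spanNum {d₁ d₂ : X → X → ℝ} {F : Finset G} (hF : F.Nonempty) {ε₁ ε₂ : ℝ}
    {E : Set X} (h : ∀ x y, d₂ x y ≤ ε₂ → d₁ x y ≤ ε₁)
    (hex : ∃ K, IsSpanningSet T d₂ F ε₂ E K) :
    spanNum T d₁ F ε₁ E ≤ spanNum T d₂ F ε₂ E := by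
  obtain ⟨K₀, hK₀⟩ := hex
  have hne : {n | ∃ K, IsSpanningSet T d₂ F ε₂ E K ∧ K.card = n}.Nonempty :=
    ⟨K₀.card, K₀, hK₀, rfl⟩
  obtain ⟨K, hK, hcard⟩ := Nat.sInf_mem hne
  calc spanNum T d₁ F ε₁ E ≤ K.card := Nat.sInf_le ⟨K, hK.mono hF h, rfl⟩
    _ = spanNum T d₂ F ε₂ E := hcard

/-- `limsup_n |F_n|⁻¹ log r_{F_n}(d, ε, X)`, the numerator in both metric mean dimensions. -/
noncomputable def spanGrowth (T : G → X → X) (d : X → X → ℝ) (Fs : ℕ → Finset G) (ε : ℝ) :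
    ℝ≥0∞ :=
  limsup (fun n => ENNReal.ofReal (Real.log (spanNum T d (Fs n) ε univ : ℝ) / ((Fs n).card : ℝ)))
    atTop

variable [TopologicalSpace X] [CompactSpace X] {Fs : ℕ → Finset G}

theorem spanGrowth_le_spanGrowth (hT : ∀ g, Continuous (T g)) (hFs : ∀ n, (Fs n).Nonempty)
    {d₁ d₂ : X → X → ℝ} (hdc : ∀ y, Continuous (d₂ · y)) (hd0 : ∀ x, d₂ x x = 0) {ε₁ ε₂ : ℝ}
    (hε₂ : 0 < ε₂) (h : ∀ x y, d₂ x y ≤ ε₂ → d₁ x y ≤ ε₁) :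
    spanGrowth T d₁ Fs ε₁ ≤ spanGrowth T d₂ Fs ε₂ :=
  limsup_le_limsup <| Eventually.of_forall fun n => ENNReal.ofReal_le_ofReal <|
    div_le_div_of_nonneg_right (Real.log_natCast_le_log_natCast <|
      spanNum_le_spanNum (hFs n) h (exists_isSpanningSet hT hdc hd0 _ hε₂)) (Nat.cast_nonneg _)

theorem eventually_spanGrowth_rpow_div_le (hT : ∀ g, Continuous (T g))
    (hFs : ∀ n, (Fs n).Nonempty) {d₁ d₂ : X → X → ℝ} (hdc : ∀ y, Continuous (d₂ · y))
    (hd0 : ∀ x, d₂ x x = 0) {θ : ℝ} (hθ : 0 < θ)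
    (h : ∀ᶠ ε in 𝓝[>] (0 : ℝ), ∀ x y, d₂ x y ≤ ε → d₁ x y ≤ ε ^ θ) :
    ∀ᶠ ε in 𝓝[>] (0 : ℝ),
      spanGrowth T d₁ Fs (ε ^ θ) / ENNReal.ofReal |Real.log (ε ^ θ)| ≤
        spanGrowth T d₂ Fs ε / ENNReal.ofReal |Real.log ε| / ENNReal.ofReal θ := by
  filter_upwards [h, self_mem_nhdsWithin] with ε hε (hε0 : 0 < ε)
  rw [Real.log_rpow hε0, abs_mul, abs_of_pos hθ, ENNReal.ofReal_mul hθ.le, mul_comm,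
    div_eq_mul_inv, ENNReal.mul_inv (Or.inr ENNReal.ofReal_ne_top) (Or.inl ENNReal.ofReal_ne_top)]
  simp only [div_eq_mul_inv, ← mul_assoc]
  gcongr
  exact spanGrowth_le_spanGrowth hT hFs hdc hd0 hε0 hε

end Spanning

/-- The only property of metric mean dimension that the continuity argument uses. -/
def ScalesUnderPowers {X : Type*} [TopologicalSpace X] (M : (X → X → ℝ) → ℝ≥0∞) : Prop :=
  ∀ ⦃d₁ d₂ : X → X → ℝ⦄ ⦃θ : ℝ⦄, 0 < θ → (∀ y, Continuous (d₂ · y)) → (∀ x, d₂ x x = 0) →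
    (∀ᶠ ε in 𝓝[>] (0 : ℝ), ∀ x y, d₂ x y ≤ ε → d₁ x y ≤ ε ^ θ) →
      M d₁ ≤ M d₂ / ENNReal.ofReal θ

section MeanDimension

variable {G X : Type*} [TopologicalSpace X] [CompactSpace X] {T : G → X → X}
  {Fs : ℕ → Finset G}

theorem scalesUnderPowers_mdimMUpper (hT : ∀ g, Continuous (T g))
    (hFs : ∀ n, (Fs n).Nonempty) : ScalesUnderPowers fun d => mdimMUpper T d Fs univ := by
  intro d₁ d₂ θ hθ hdc hd0 h
  calc mdimMUpper T d₁ Fs univ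
      = limsup (fun ε => spanGrowth T d₁ Fs (ε ^ θ) / ENNReal.ofReal |Real.log (ε ^ θ)|)
          (𝓝[>] 0) := ((limsup_comp _ _ _).trans (by rw [Real.map_rpow_nhdsGT_zero hθ])).symm
    _ ≤ limsup (fun ε => spanGrowth T d₂ Fs ε / ENNReal.ofReal |Real.log ε| / ENNReal.ofReal θ)
          (𝓝[>] 0) := limsup_le_limsup (eventually_spanGrowth_rpow_div_le hT hFs hdc hd0 hθ h)
    _ = mdimMUpper T d₂ Fs univ / ENNReal.ofReal θ :=
        ENNReal.limsup_div_const _ (ENNReal.ofReal_pos.2 hθ).ne'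

theorem scalesUnderPowers_mdimMLower (hT : ∀ g, Continuous (T g))
    (hFs : ∀ n, (Fs n).Nonempty) : ScalesUnderPowers fun d => mdimMLower T d Fs univ := by
  intro d₁ d₂ θ hθ hdc hd0 h
  calc mdimMLower T d₁ Fs univ
      = liminf (fun ε => spanGrowth T d₁ Fs (ε ^ θ) / ENNReal.ofReal |Real.log (ε ^ θ)|)
          (𝓝[>] 0) := ((liminf_comp _ _ _).trans (by rw [Real.map_rpow_nhdsGT_zero hθ])).symm
    _ ≤ liminf (fun ε => spanGrowth T d₂ Fs ε / ENNReal.ofReal |Real.log ε| / ENNReal.ofReal θ)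
          (𝓝[>] 0) := liminf_le_liminf (eventually_spanGrowth_rpow_div_le hT hFs hdc hd0 hθ h)
    _ = mdimMLower T d₂ Fs univ / ENNReal.ofReal θ :=
        ENNReal.liminf_div_const _ (ENNReal.ofReal_pos.2 hθ).ne'

end MeanDimension

theorem eventually_forall_le_rpow_of_le {ρ a b : ℝ} {φ ψ : ℝ → ℝ} (ha : 0 < a) (hb : 0 ≤ b)
    (hφ : MonotoneOn φ (Icc 0 ρ)) (hψ0 : ψ 0 = 0)
    (hbd : ∀ᶠ t in 𝓝[>] (0 : ℝ), t ^ a ≤ φ t ∧ ψ t ≤ t ^ b) :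
    ∀ᶠ ε in 𝓝[>] (0 : ℝ), ∀ t ∈ Icc 0 ρ, φ t ≤ ε → ψ t ≤ ε ^ (b / a) := by
  obtain ⟨t₁, ht₁, hsub⟩ := mem_nhdsGT_iff_exists_Ioc_subset.1 hbd
  filter_upwards [Ioo_mem_nhdsGT (Real.rpow_pos_of_pos ht₁ a)] with ε ⟨hε0, hε⟩ t ht hφt
  rcases ht.1.eq_or_lt with rfl | ht0
  · rw [hψ0]
    positivity
  -- `φ t ≤ ε < t₁ ^ a ≤ φ t₁` keeps `t` in the range `(0, t₁]` of the power bounds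
  have htt₁ : t ≤ t₁ := by
    by_contra! h
    have := hφ ⟨le_of_lt ht₁, h.le.trans ht.2⟩ ht h.le
    linarith [(hsub ⟨ht₁, le_rfl⟩).1]
  obtain ⟨hlo, hhi⟩ := hsub ⟨ht0, htt₁⟩
  calc ψ t ≤ t ^ b := hhi
    _ = (t ^ a) ^ (b / a) := by rw [← Real.rpow_mul ht0.le, mul_div_cancel₀ _ ha.ne']
    _ ≤ ε ^ (b / a) := Real.rpow_le_rpow (by positivity) (hlo.trans hφt) (div_nonneg hb ha.le)

section Aplus

variable {ρ : ℝ} {ζ : ℝ → ℝ}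

theorem MemA.apply_zero (hζ : MemA ρ ζ) (hρ : 0 ≤ ρ) : ζ 0 = 0 :=
  (hζ.2.2.2.2 0 ⟨le_rfl, hρ⟩).2 rfl

theorem MemA.apply_pos (hζ : MemA ρ ζ) {t : ℝ} (ht : t ∈ Ioc 0 ρ) : 0 < ζ t :=
  (hζ.2.2.1 t (Ioc_subset_Icc_self ht)).lt_of_ne fun h =>
    ht.1.ne' ((hζ.2.2.2.2 t (Ioc_subset_Icc_self ht)).1 h.symm)

theorem MemA.tendsto_nhdsGT_zero (hζ : MemA ρ ζ) (hρ : 0 < ρ) :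
    Tendsto ζ (𝓝[>] 0) (𝓝[>] 0) := by
  have hIoc : Ioc 0 ρ ∈ 𝓝[>] (0 : ℝ) := Ioc_mem_nhdsGT hρ
  have hlim : Tendsto ζ (𝓝[>] 0) (𝓝 (ζ 0)) := (hζ.1 0 ⟨le_rfl, hρ.le⟩).tendsto.mono_left
    (nhdsWithin_le_of_mem (mem_of_superset hIoc Ioc_subset_Icc_self))
  rw [hζ.apply_zero hρ.le] at hlim
  exact tendsto_nhdsWithin_iff.2 ⟨hlim, mem_of_superset hIoc fun t ht => hζ.apply_pos ht⟩

theorem MemAplus.tendsto_log_div_log (hζ : MemAplus ρ ζ) (hρ : 0 < ρ) :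
    Tendsto (fun t => Real.log (ζ t) / Real.log t) (𝓝[>] 0) (𝓝 (km ζ)) := by
  obtain ⟨hA, hmM, hpos⟩ := hζ
  have hnonneg : ∀ᶠ t in 𝓝[>] (0 : ℝ), 0 ≤ Real.log (ζ t) / Real.log t := by
    filter_upwards [hA.tendsto_nhdsGT_zero hρ (Ioo_mem_nhdsGT one_pos),
      Ioo_mem_nhdsGT one_pos] with t hζt ht
    exact div_nonneg_of_nonpos (Real.log_nonpos hζt.1.le hζt.2.le) (Real.log_nonpos ht.1.le ht.2.le)
  -- an unbounded `limsup` in `ℝ` is `0` by convention, which `0 < k_m(ζ) = k_M(ζ)` excludes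
  have hbdd : IsBoundedUnder (· ≤ ·) (𝓝[>] 0) fun t => Real.log (ζ t) / Real.log t := by
    by_contra h
    exact hpos.ne' (hmM.trans (Real.limsup_of_not_isBoundedUnder h))
  exact tendsto_of_liminf_eq_limsup rfl hmM.symm hbdd (isBoundedUnder_of_eventually_ge hnonneg)

theorem MemAplus.eventually_rpow_le_le_rpow (hζ : MemAplus ρ ζ) (hρ : 0 < ρ) {η : ℝ}
    (hη : 0 < η) : ∀ᶠ t in 𝓝[>] (0 : ℝ), t ^ (km ζ + η) ≤ ζ t ∧ ζ t ≤ t ^ (km ζ - η) := by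
  have hk : km ζ ∈ Ioo (km ζ - η) (km ζ + η) := ⟨sub_lt_self _ hη, lt_add_of_pos_right _ hη⟩
  filter_upwards [hζ.tendsto_log_div_log hρ (isOpen_Ioo.mem_nhds hk),
    hζ.1.tendsto_nhdsGT_zero hρ self_mem_nhdsWithin, Ioo_mem_nhdsGT one_pos]
    with t ⟨hlo, hhi⟩ (hζt : 0 < ζ t) ⟨ht0, ht1⟩
  have hlog : Real.log t < 0 := Real.log_neg ht0 ht1
  exact ⟨(Real.rpow_le_iff_le_log ht0 hζt).2 ((div_lt_iff_of_neg hlog).1 hhi).le,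
    (Real.le_rpow_iff_log_le hζt ht0).2 ((lt_div_iff_of_neg hlog).1 hlo).le⟩

theorem mem_tildeB_iff {ε : ℝ} {ϑ : {f : ℝ → ℝ // MemAplus ρ f}} :
    ϑ ∈ tildeB ρ ζ ε ↔ ∀ x ∈ Ioc 0 ρ, ζ x * x ^ ε < ϑ.1 x ∧ ϑ.1 x < ζ x / x ^ ε := by
  simp only [tildeB, mem_ofPred_eq]
  refine forall₂_congr fun x hx => ?_
  have hxε : x ^ ε ≠ 0 := (Real.rpow_pos_of_pos hx.1 ε).ne'
  rw [show ζ x * (x ^ ε - 1) = ζ x * x ^ ε - ζ x by ring,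
    show ζ x * (1 - x ^ ε) / x ^ ε = ζ x / x ^ ε - ζ x by field_simp,
    sub_lt_sub_iff_right, sub_lt_sub_iff_right]

theorem eventually_rpow_le_le_rpow_of_mem_tildeB (hρ : 0 < ρ) {k δ : ℝ}
    (hζ : ∀ᶠ t in 𝓝[>] (0 : ℝ), t ^ (k + δ) ≤ ζ t ∧ ζ t ≤ t ^ (k - δ))
    {ϑ : {f : ℝ → ℝ // MemAplus ρ f}} (hϑ : ϑ ∈ tildeB ρ ζ δ) :
    ∀ᶠ t in 𝓝[>] (0 : ℝ), t ^ (k + 2 * δ) ≤ ϑ.1 t ∧ ϑ.1 t ≤ t ^ (k - 2 * δ) := by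
  filter_upwards [hζ, Ioc_mem_nhdsGT hρ] with t ⟨hlo, hhi⟩ ht
  have htδ : 0 < t ^ δ := Real.rpow_pos_of_pos ht.1 δ
  obtain ⟨hϑlo, hϑhi⟩ := mem_tildeB_iff.1 hϑ t ht
  constructor
  · calc t ^ (k + 2 * δ) = t ^ (k + δ) * t ^ δ := by rw [← Real.rpow_add ht.1]; ring_nf
      _ ≤ ζ t * t ^ δ := mul_le_mul_of_nonneg_right hlo htδ.le
      _ ≤ ϑ.1 t := hϑlo.le
  · calc ϑ.1 t ≤ ζ t / t ^ δ := hϑhi.le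
      _ ≤ t ^ (k - δ) / t ^ δ := div_le_div_of_nonneg_right hhi htδ.le
      _ = t ^ (k - 2 * δ) := by rw [← Real.rpow_sub ht.1]; ring_nf

theorem self_mem_tildeB (hρ1 : ρ < 1) {δ : ℝ} (hδ : 0 < δ) (ζ : {f : ℝ → ℝ // MemAplus ρ f}) :
    ζ ∈ tildeB ρ ζ.1 δ := by
  refine mem_tildeB_iff.2 fun x hx => ?_
  have hxδ : x ^ δ < 1 := Real.rpow_lt_one hx.1.le (hx.2.trans_lt hρ1) hδ
  have hlt : ζ.1 x * x ^ δ < ζ.1 x := mul_lt_of_lt_one_right (ζ.2.1.apply_pos hx) hxδ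
  exact ⟨hlt, (lt_div_iff₀ (Real.rpow_pos_of_pos hx.1 δ)).2 hlt⟩

theorem tildeB_mem_nhds (hρ1 : ρ < 1) {δ : ℝ} (hδ : 0 < δ) (ζ : {f : ℝ → ℝ // MemAplus ρ f}) :
    tildeB ρ ζ.1 δ ∈ @nhds _ (Ttop ρ) ζ :=
  @IsOpen.mem_nhds _ (Ttop ρ) _ _
    (TopologicalSpace.isOpen_generateFrom_of_mem ⟨ζ.1, ζ.2, δ, hδ, rfl⟩) (self_mem_tildeB hρ1 hδ ζ)

end Aplus

namespace ScalesUnderPowers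

variable {X : Type*} [TopologicalSpace X] {M : (X → X → ℝ) → ℝ≥0∞} {d : X → X → ℝ} {ρ : ℝ}

theorem comp_le_comp_div (hM : ScalesUnderPowers M) (hdρ : ∀ x y, d x y ∈ Icc 0 ρ)
    (hdc : ∀ y, Continuous (d · y)) (hd0 : ∀ x, d x x = 0) {φ ψ : ℝ → ℝ}
    (hφc : ContinuousOn φ (Icc 0 ρ)) (hφm : MonotoneOn φ (Icc 0 ρ)) (hφ0 : φ 0 = 0)
    (hψ0 : ψ 0 = 0) {a b : ℝ} (ha : 0 < a) (hb : 0 < b)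
    (hbd : ∀ᶠ t in 𝓝[>] (0 : ℝ), t ^ a ≤ φ t ∧ ψ t ≤ t ^ b) :
    M (fun x y => ψ (d x y)) ≤ M (fun x y => φ (d x y)) / ENNReal.ofReal (b / a) := by
  refine hM (div_pos hb ha) (fun y => hφc.comp_continuous (hdc y) fun x => hdρ x y)
    (fun x => by rw [hd0, hφ0]) ?_
  filter_upwards [eventually_forall_le_rpow_of_le ha hb.le hφm hψ0 hbd] with ε hε x y
  exact hε _ (hdρ x y)

theorem comp_ne_top (hM : ScalesUnderPowers M) (hρ : 0 < ρ) (hdρ : ∀ x y, d x y ∈ Icc 0 ρ)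
    (hdc : ∀ y, Continuous (d · y)) (hd0 : ∀ x, d x x = 0) (hfin : M d ≠ ⊤) {ζ : ℝ → ℝ}
    (hζ : MemAplus ρ ζ) : M (fun x y => ζ (d x y)) ≠ ⊤ := by
  have hk : 0 < km ζ / 2 := half_pos hζ.2.2
  have hbd : ∀ᶠ t in 𝓝[>] (0 : ℝ), t ^ (1 : ℝ) ≤ id t ∧ ζ t ≤ t ^ (km ζ / 2) := by
    filter_upwards [hζ.eventually_rpow_le_le_rpow hρ hk] with t ht
    exact ⟨by simp, ht.2.trans_eq (by ring_nf)⟩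
  have hle := hM.comp_le_comp_div hdρ hdc hd0 continuousOn_id monotoneOn_id rfl
    (hζ.1.apply_zero hρ.le) one_pos hk hbd
  exact ne_top_of_le_ne_top (ENNReal.div_ne_top hfin (ENNReal.ofReal_pos.2 (by positivity)).ne')
    hle

theorem comp_bounds_of_mem_tildeB (hM : ScalesUnderPowers M) (hρ : 0 < ρ)
    (hdρ : ∀ x y, d x y ∈ Icc 0 ρ) (hdc : ∀ y, Continuous (d · y)) (hd0 : ∀ x, d x x = 0)
    {ζ ϑ : {f : ℝ → ℝ // MemAplus ρ f}} {δ : ℝ} (hδ : 0 < δ) (hδk : δ < km ζ.1 / 2)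
    (hϑ : ϑ ∈ tildeB ρ ζ.1 δ) :
    ENNReal.ofReal ((km ζ.1 - 2 * δ) / (km ζ.1 + 2 * δ)) * (M fun x y => ζ.1 (d x y)) ≤
        (M fun x y => ϑ.1 (d x y)) ∧
      (M fun x y => ϑ.1 (d x y)) ≤
        (M fun x y => ζ.1 (d x y)) / ENNReal.ofReal ((km ζ.1 - 2 * δ) / (km ζ.1 + 2 * δ)) := by
  set k := km ζ.1
  have hlo : 0 < k - 2 * δ := by linarith
  have hhi : 0 < k + 2 * δ := by linarith
  have hζbd := ζ.2.eventually_rpow_le_le_rpow hρ (by positivity : 0 < 2 * δ)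
  have hϑbd := eventually_rpow_le_le_rpow_of_mem_tildeB hρ (ζ.2.eventually_rpow_le_le_rpow hρ hδ) hϑ
  have hζϑ := hM.comp_le_comp_div hdρ hdc hd0 ϑ.2.1.1 ϑ.2.1.2.1 (ϑ.2.1.apply_zero hρ.le)
    (ζ.2.1.apply_zero hρ.le) hhi hlo
    (by filter_upwards [hϑbd, hζbd] with t h₁ h₂ using ⟨h₁.1, h₂.2⟩)
  have hϑζ := hM.comp_le_comp_div hdρ hdc hd0 ζ.2.1.1 ζ.2.1.2.1 (ζ.2.1.apply_zero hρ.le)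
    (ϑ.2.1.apply_zero hρ.le) hhi hlo
    (by filter_upwards [hζbd, hϑbd] with t h₁ h₂ using ⟨h₁.1, h₂.2⟩)
  refine ⟨?_, hϑζ⟩
  rw [mul_comm]
  exact (ENNReal.le_div_iff_mul_le (Or.inl (ENNReal.ofReal_pos.2 (div_pos hlo hhi)).ne')
    (Or.inl ENNReal.ofReal_ne_top)).1 hζϑ

theorem tendsto_comp (hM : ScalesUnderPowers M) (hρ : 0 < ρ) (hρ1 : ρ < 1)
    (hdρ : ∀ x y, d x y ∈ Icc 0 ρ) (hdc : ∀ y, Continuous (d · y)) (hd0 : ∀ x, d x x = 0)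
    (ζ : {f : ℝ → ℝ // MemAplus ρ f}) :
    Tendsto (fun ϑ : {f : ℝ → ℝ // MemAplus ρ f} => M fun x y => ϑ.1 (d x y))
      (@nhds _ (Ttop ρ) ζ) (𝓝 (M fun x y => ζ.1 (d x y))) := by
  set k := km ζ.1
  have hk : 0 < k := ζ.2.2.2
  have hθ : Tendsto (fun δ : ℝ => ENNReal.ofReal ((k - 2 * δ) / (k + 2 * δ))) (𝓝[>] 0) (𝓝 1) := by
    have hc : ContinuousAt (fun δ : ℝ => (k - 2 * δ) / (k + 2 * δ)) 0 :=
      ContinuousAt.div (by fun_prop) (by fun_prop) (by simp [hk.ne'])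
    simpa [hk.ne'] using (ENNReal.tendsto_ofReal hc.tendsto).mono_left nhdsWithin_le_nhds
  refine tendsto_of_forall_eventually_le_le (p := 𝓝[>] (0 : ℝ))
    (by simpa using ENNReal.Tendsto.mul_const hθ (Or.inl one_ne_zero))
    (by simpa using ENNReal.Tendsto.const_div hθ (Or.inl ENNReal.one_ne_top)) ?_
  filter_upwards [Ioo_mem_nhdsGT (half_pos hk)] with δ ⟨hδ, hδk⟩
  filter_upwards [tildeB_mem_nhds hρ1 hδ ζ] with ϑ hϑ
  exact hM.comp_bounds_of_mem_tildeB hρ hdρ hdc hd0 hδ hδk hϑ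

theorem continuous_toReal_comp (hM : ScalesUnderPowers M) (hρ : 0 < ρ) (hρ1 : ρ < 1)
    (hdρ : ∀ x y, d x y ∈ Icc 0 ρ) (hdc : ∀ y, Continuous (d · y)) (hd0 : ∀ x, d x x = 0)
    (hfin : M d ≠ ⊤) :
    @Continuous {f : ℝ → ℝ // MemAplus ρ f} ℝ (Ttop ρ) inferInstance
      fun ζ => (M fun x y => ζ.1 (d x y)).toReal := by
  let := Ttop ρ
  exact continuous_iff_continuousAt.2 fun ζ =>
    (ENNReal.tendsto_toReal (hM.comp_ne_top hρ hdρ hdc hd0 hfin ζ.2)).comp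
      (hM.tendsto_comp hρ hρ1 hdρ hdc hd0 ζ)

end ScalesUnderPowers

section Metric

variable {X : Type*} [TopologicalSpace X] {d : X → X → ℝ}

theorem IsMetricOn.continuous_left (hd : IsMetricOn d) (hc : InducesTopology d) (y : X) :
    Continuous (d · y) := by
  obtain ⟨-, -, hsymm, htri⟩ := hd
  refine continuous_iff_continuousAt.2 fun x => Metric.tendsto_nhds.2 fun ε hε => ?_
  filter_upwards [(hc x _).2 ⟨ε, hε, subset_rfl⟩] with z (hz : d x z < ε)
  rw [Real.dist_eq, abs_lt]
  constructor <;> linarith [htri x z y, htri z x y, hsymm x z]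

theorem IsMetricOn.le_setDiam_univ [CompactSpace X] (hd : IsMetricOn d)
    (hdc : ∀ y, Continuous (d · y)) (x y : X) : d x y ≤ setDiam d univ := by
  obtain ⟨z, -, hz⟩ := isCompact_univ.exists_isMaxOn ⟨x, mem_univ x⟩ (hdc y).continuousOn
  obtain ⟨-, -, hsymm, htri⟩ := hd
  refine le_csSup ⟨2 * d z y, ?_⟩ ⟨x, mem_univ _, y, mem_univ _, rfl⟩
  rintro r ⟨a, -, b, -, rfl⟩
  have ha : d a y ≤ d z y := hz (mem_univ a)
  have hb : d b y ≤ d z y := hz (mem_univ b)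
  linarith [htri a y b, hsymm y b]

end Metric

theorem mdimM_continuous_on_Aplus_general {G X : Type*} [Group G]
    [TopologicalSpace X] [CompactSpace X]
    (T : G → X → X) (hT : IsContAction T)
    (d : X → X → ℝ) (hd : IsMetricOn d) (hc : InducesTopology d)
    (Fs : ℕ → Finset G) (hFol : IsFolner Fs)
    (ρ : ℝ) (hρ : ρ = setDiam d (Set.univ : Set X)) (hρ1 : ρ < 1)
    (hfin : mdimMUpper T d Fs (Set.univ : Set X) ≠ ⊤) :
    @Continuous {f : ℝ → ℝ // MemAplus ρ f} ℝ (Ttop ρ) inferInstance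
      (fun ζ => (mdimMUpper T (fun x y => ζ.1 (d x y)) Fs (Set.univ : Set X)).toReal) ∧
    @Continuous {f : ℝ → ℝ // MemAplus ρ f} ℝ (Ttop ρ) inferInstance
      (fun ζ => (mdimMLower T (fun x y => ζ.1 (d x y)) Fs (Set.univ : Set X)).toReal) := by
  have hdc := hd.continuous_left hc
  have hdρ : ∀ x y, d x y ∈ Icc 0 ρ := fun x y => ⟨hd.1 x y, hρ ▸ hd.le_setDiam_univ hdc x y⟩
  have hd0 : ∀ x, d x x = 0 := fun x => (hd.2.1 x x).2 rfl
  rcases le_or_gt ρ 0 with hρ0 | hρ0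
  · have hconst : ∀ ζ : {f : ℝ → ℝ // MemAplus ρ f}, (fun x y => ζ.1 (d x y)) = fun _ _ => 0 := by
      intro ζ
      funext x y
      have hxy : d x y = 0 := le_antisymm ((hdρ x y).2.trans hρ0) (hdρ x y).1
      rw [hxy, ζ.2.1.apply_zero (hxy ▸ hdρ x y).2]
    simp only [hconst]
    exact ⟨@continuous_const _ _ (Ttop ρ) _ _, @continuous_const _ _ (Ttop ρ) _ _⟩
  · exact ⟨(scalesUnderPowers_mdimMUpper hT.2.2 hFol.1).continuous_toReal_comp hρ0 hρ1 hdρ hdc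
        hd0 hfin,
      (scalesUnderPowers_mdimMLower hT.2.2 hFol.1).continuous_toReal_comp hρ0 hρ1 hdρ hdc hd0
        (ne_top_of_le_ne_top hfin liminf_le_limsup)⟩

/-- if `mdim_M(X,G,d) < ∞` and `ρ = diam_d X < 1`, then
`ζ ↦ overline{mdim}_M(X,G,ζ∘d)` and `ζ ↦ underline{mdim}_M(X,G,ζ∘d)` are continuous
on `(A⁺[0,ρ], T)`. -/
theorem mdimM_continuous_on_Aplus {G X : Type*} [Group G] [Countable G]
    [TopologicalSpace X] [CompactSpace X]
    (T : G → X → X) (hT : IsContAction T)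
    (d : X → X → ℝ) (hd : IsMetricOn d) (hc : InducesTopology d)
    (Fs : ℕ → Finset G) (hFol : IsFolner Fs)
    (ρ : ℝ) (hρ : ρ = setDiam d (Set.univ : Set X)) (hρ1 : ρ < 1)
    (hfin : mdimMUpper T d Fs (Set.univ : Set X) ≠ ⊤) :
    @Continuous {f : ℝ → ℝ // MemAplus ρ f} ℝ (Ttop ρ) inferInstance
      (fun ζ => (mdimMUpper T (fun x y => ζ.1 (d x y)) Fs (Set.univ : Set X)).toReal) ∧
    @Continuous {f : ℝ → ℝ // MemAplus ρ f} ℝ (Ttop ρ) inferInstance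
      (fun ζ => (mdimMLower T (fun x y => ζ.1 (d x y)) Fs (Set.univ : Set X)).toReal) :=
  mdimM_continuous_on_Aplus_general T hT d hd hc Fs hFol ρ hρ hρ1 hfin

end MeanDim19
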